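/- arXiv:2210.11132 — 3 statements merged into one kernel-verified Lean document; each statement's English description precedes it below -/
import Mathlib

section
/- Strategic Copy-Pruning (Theorem 1). Let a binary QIP with data (A, b, c, I∃, I∀) be given, let k ∈ I∀ be a universal index, let x̃ ∈ {0,1}^n be a full assignment, and set x̂_k = 1 − x̃_k. Assume: (i) val((x̃_1, …, x̃_k)) = c·x̃, i.e. the minimax value of the node reached by the first k entries of x̃ equals the objective value of x̃; (ii) Condition (2) holds; (iii) Condition (3) holds. Then val((x̃_1, …, x̃_{k−1})) = c·x̃, i.e. the minimax value of the universal decision node for variable x_k equals c·x̃ without exploring the branch x_k = x̂_k. -/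
/-- The minimax value of the node of a binary QIP in which the first `j`
(0-based) variables have been fixed according to `p` (entries of `p` with
index `≥ j` are irrelevant, since they are overwritten during the recursion).
At a leaf (`j = n`) the value is the objective `c·p` if `A p ≤ b` and `⊥ = -∞`
otherwise; at an inner node the two branches `0` and `1` are combined by `min`
if the variable is universal (`∈ IA`) and by `max` if it is existential. -/
noncomputable def qipVal {n m : ℕ} (A : Fin m → Fin n → ℝ) (b : Fin m → ℝ)
    (c : Fin n → ℝ) (IA : Finset (Fin n)) (j : ℕ) (p : Fin n → ℝ) : EReal :=
  if h : j < n then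
    (if (⟨j, h⟩ : Fin n) ∈ IA then
      min (qipVal A b c IA (j + 1) (Function.update p ⟨j, h⟩ 0))
          (qipVal A b c IA (j + 1) (Function.update p ⟨j, h⟩ 1))
    else
      max (qipVal A b c IA (j + 1) (Function.update p ⟨j, h⟩ 0))
          (qipVal A b c IA (j + 1) (Function.update p ⟨j, h⟩ 1)))
  else
    (if ∀ i, ∑ j', A i j' * p j' ≤ b i then ((∑ j', c j' * p j' : ℝ) : EReal) else ⊥)
termination_by n - j
decreasing_by all_goals omega

lemma scp_aux {n m : ℕ} (A : Fin m → Fin n → ℝ) (b : Fin m → ℝ) (c : Fin n → ℝ)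
    (IA : Finset (Fin n)) (k : Fin n) (hk : k ∈ IA)
    (xt : Fin n → ℝ) (hbin : ∀ j, xt j = 0 ∨ xt j = 1)
    (cond2 : c k * ((1 - xt k) - xt k)
        + ∑ j ∈ Finset.univ.filter (fun j => j ∈ IA ∧ k < j ∧ c j ≤ 0), c j * (1 - xt j)
        - ∑ j ∈ Finset.univ.filter (fun j => j ∈ IA ∧ k < j ∧ 0 < c j), c j * xt j ≥ 0)
    (cond3 : ∀ i,
        (∑ j ∈ Finset.univ.filter (fun j => j ∉ IA ∨ j < k), A i j * xt j)
        + A i k * (1 - xt k)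
        + ∑ j ∈ Finset.univ.filter (fun j => j ∈ IA ∧ k < j ∧ 0 < A i j), A i j ≤ b i)
    (j : ℕ) (hj : k.val < j) (p : Fin n → ℝ)
    (hp : ∀ l : Fin n, l.val < j →
        ((l ∉ IA ∨ l < k) → p l = xt l) ∧ (l = k → p l = 1 - xt k) ∧
        (l ∈ IA → k < l → (p l = 0 ∨ p l = 1))) :
    ((∑ l, c l * xt l : ℝ) : EReal) ≤ qipVal A b c IA j p := by
  rw [qipVal]
  by_cases h : j < n
  · rw [dif_pos h]
    set fj : Fin n := ⟨j, h⟩ with hfj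
    have hkfj : k < fj := Fin.lt_def.mpr hj
    have hstep : ∀ v : ℝ, (v = 0 ∨ v = 1) → (fj ∉ IA → v = xt fj) →
        ((∑ l, c l * xt l : ℝ) : EReal) ≤
          qipVal A b c IA (j + 1) (Function.update p fj v) := by
      intro v hv hvx
      refine scp_aux A b c IA k hk xt hbin cond2 cond3 (j + 1) (by omega) _ ?_
      intro l hl
      by_cases hlj : l = fj
      · subst hlj
        rw [Function.update_self]
        refine ⟨?_, ?_, fun _ _ => hv⟩
        · rintro (hni | hlt)
          · exact hvx hni
          · exact absurd hlt (asymm hkfj)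
        · intro hlk; exact absurd hlk.symm (ne_of_lt hkfj)
      · have hl' : l.val < j := by
          have : l.val ≠ j := fun hc => hlj (Fin.ext hc)
          omega
        rw [Function.update_of_ne hlj]
        exact hp l hl'
    by_cases hmem : fj ∈ IA
    · rw [if_pos hmem]
      exact le_min (hstep 0 (Or.inl rfl) (fun hn => absurd hmem hn))
        (hstep 1 (Or.inr rfl) (fun hn => absurd hmem hn))
    · rw [if_neg hmem]
      rcases hbin fj with h0 | h1
      · exact le_trans (hstep 0 (Or.inl rfl) (fun _ => h0.symm)) (le_max_left _ _)
      · exact le_trans (hstep 1 (Or.inr rfl) (fun _ => h1.symm)) (le_max_right _ _)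
  · rw [dif_neg h]
    have hall : ∀ l : Fin n, ((l ∉ IA ∨ l < k) → p l = xt l) ∧ (l = k → p l = 1 - xt k) ∧
        (l ∈ IA → k < l → (p l = 0 ∨ p l = 1)) :=
      fun l => hp l (by omega)
    -- classification of indices
    have hcase : ∀ l : Fin n, (l ∉ IA ∨ l < k) ∨ l = k ∨ (l ∈ IA ∧ k < l) := by
      intro l
      by_cases h1 : l ∉ IA ∨ l < k
      · exact Or.inl h1
      · push_neg at h1
        obtain ⟨hIA, hnlt⟩ := h1
        rcases eq_or_lt_of_le hnlt with he | hlt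
        · exact Or.inr (Or.inl he.symm)
        · exact Or.inr (Or.inr ⟨hIA, hlt⟩)
    have hfeas : ∀ i, ∑ l, A i l * p l ≤ b i := by
      intro i
      refine le_trans ?_ (cond3 i)
      rw [Finset.sum_filter, Finset.sum_filter]
      have hmid : A i k * (1 - xt k) =
          ∑ l, if l = k then A i l * (1 - xt k) else 0 := by
        rw [Finset.sum_ite_eq' Finset.univ k (fun l => A i l * (1 - xt k))]
        simp
      rw [hmid, ← Finset.sum_add_distrib, ← Finset.sum_add_distrib]
      apply Finset.sum_le_sum
      intro l _
      obtain ⟨h1, h2, h3⟩ := hall l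
      rcases hcase l with hc | hc | hc
      · have hne : l ≠ k := by
          rintro rfl
          rcases hc with hni | hlt
          · exact hni hk
          · exact lt_irrefl _ hlt
        have hn3 : ¬ (l ∈ IA ∧ k < l ∧ 0 < A i l) := by
          rintro ⟨hIA, hlt, -⟩
          rcases hc with hni | hlt'
          · exact hni hIA
          · exact absurd hlt' (asymm hlt)
        rw [if_pos hc, if_neg hne, if_neg hn3, h1 hc]
        simp
      · subst hc
        have hn1 : ¬ (l ∉ IA ∨ l < l) := by
          rintro (hni | hlt)
          · exact hni hk
          · exact lt_irrefl _ hlt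
        have hn3 : ¬ (l ∈ IA ∧ l < l ∧ 0 < A i l) := by
          rintro ⟨-, hlt, -⟩; exact lt_irrefl _ hlt
        rw [if_neg hn1, if_pos rfl, if_neg hn3, h2 rfl]
        simp
      · obtain ⟨hIA, hlt⟩ := hc
        have hn1 : ¬ (l ∉ IA ∨ l < k) := by
          rintro (hni | hlt')
          · exact hni hIA
          · exact absurd hlt' (asymm hlt)
        have hne : l ≠ k := (ne_of_gt hlt)
        rw [if_neg hn1, if_neg hne]
        have hpl := h3 hIA hlt
        by_cases hA : 0 < A i l
        · rw [if_pos ⟨hIA, hlt, hA⟩]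
          rcases hpl with h0 | h0 <;> rw [h0] <;> nlinarith
        · rw [if_neg (by rintro ⟨-, -, hA'⟩; exact hA hA')]
          push_neg at hA
          rcases hpl with h0 | h0 <;> rw [h0] <;> nlinarith
    rw [if_pos hfeas]
    rw [EReal.coe_le_coe_iff]
    have key : (∑ l, c l * xt l) +
        (c k * ((1 - xt k) - xt k)
          + ∑ l ∈ Finset.univ.filter (fun l => l ∈ IA ∧ k < l ∧ c l ≤ 0), c l * (1 - xt l)
          - ∑ l ∈ Finset.univ.filter (fun l => l ∈ IA ∧ k < l ∧ 0 < c l), c l * xt l)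
        ≤ ∑ l, c l * p l := by
      rw [Finset.sum_filter, Finset.sum_filter]
      have hmid : c k * ((1 - xt k) - xt k) =
          ∑ l, if l = k then c l * ((1 - xt k) - xt k) else 0 := by
        rw [Finset.sum_ite_eq' Finset.univ k (fun l => c l * ((1 - xt k) - xt k))]
        simp
      rw [hmid]
      rw [show ∀ a b d e : ℝ, a + (b + d - e) = (a + b + d) - e from by intros; ring]
      rw [← Finset.sum_add_distrib, ← Finset.sum_add_distrib, ← Finset.sum_sub_distrib]
      apply Finset.sum_le_sum
      intro l _
      obtain ⟨h1, h2, h3⟩ := hall l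
      rcases hcase l with hc | hc | hc
      · have hne : l ≠ k := by
          rintro rfl
          rcases hc with hni | hlt
          · exact hni hk
          · exact lt_irrefl _ hlt
        have hn2 : ¬ (l ∈ IA ∧ k < l ∧ c l ≤ 0) := by
          rintro ⟨hIA, hlt, -⟩
          rcases hc with hni | hlt'
          · exact hni hIA
          · exact absurd hlt' (asymm hlt)
        have hn3 : ¬ (l ∈ IA ∧ k < l ∧ 0 < c l) := by
          rintro ⟨hIA, hlt, -⟩
          rcases hc with hni | hlt'
          · exact hni hIA
          · exact absurd hlt' (asymm hlt)
        rw [if_neg hne, if_neg hn2, if_neg hn3, h1 hc]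
        simp
      · subst hc
        have hnlt : ¬ (l < l) := lt_irrefl _
        rw [if_pos rfl, if_neg (by rintro ⟨-, hlt, -⟩; exact hnlt hlt),
          if_neg (by rintro ⟨-, hlt, -⟩; exact hnlt hlt), h2 rfl]
        ring_nf
        linarith [le_refl (c l * (1 - xt l))]
      · obtain ⟨hIA, hlt⟩ := hc
        have hne : l ≠ k := (ne_of_gt hlt)
        rw [if_neg hne]
        have hpl := h3 hIA hlt
        by_cases hcl : c l ≤ 0
        · rw [if_pos ⟨hIA, hlt, hcl⟩, if_neg (by rintro ⟨-, -, hcl'⟩; linarith)]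
          rcases hpl with h0 | h0 <;> rw [h0] <;> nlinarith
        · push_neg at hcl
          rw [if_neg (by rintro ⟨-, -, hcl'⟩; linarith), if_pos ⟨hIA, hlt, hcl⟩]
          rcases hpl with h0 | h0 <;> rw [h0] <;> nlinarith
    linarith [key, cond2]
termination_by n - j
decreasing_by omega

/-- **Strategic Copy-Pruning (SCP).**  For a binary QIP with constraint system
`A x ≤ b`, objective `c` (to be maximized by the existential player) and
universal indices `IA` (existential indices being the complement), let
`k ∈ IA` be a universal index, `x̃` a full binary assignment and
`x̂_k = 1 - x̃_k`.  If the minimax value of the node reached by the prefix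
`(x̃_1, …, x̃_k)` equals `c·x̃`, and Conditions (2) and (3) hold, then the
minimax value of the universal decision node for variable `x_k`, i.e. of the
prefix `(x̃_1, …, x̃_{k-1})`, equals `c·x̃`. -/
theorem strategic_copy_pruning {n m : ℕ}
    (A : Fin m → Fin n → ℝ) (b : Fin m → ℝ) (c : Fin n → ℝ)
    (IA : Finset (Fin n)) (k : Fin n) (hk : k ∈ IA)
    (xt : Fin n → ℝ) (hbin : ∀ j, xt j = 0 ∨ xt j = 1)
    -- (i) the minimax value of the node reached by `(x̃_1, …, x̃_k)` equals `c·x̃`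
    (hval : qipVal A b c IA (k.val + 1) xt = ((∑ j, c j * xt j : ℝ) : EReal))
    -- (ii) Condition (2)
    (cond2 : c k * ((1 - xt k) - xt k)
        + ∑ j ∈ Finset.univ.filter (fun j => j ∈ IA ∧ k < j ∧ c j ≤ 0), c j * (1 - xt j)
        - ∑ j ∈ Finset.univ.filter (fun j => j ∈ IA ∧ k < j ∧ 0 < c j), c j * xt j ≥ 0)
    -- (iii) Condition (3)
    (cond3 : ∀ i,
        (∑ j ∈ Finset.univ.filter (fun j => j ∉ IA ∨ j < k), A i j * xt j)
        + A i k * (1 - xt k)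
        + ∑ j ∈ Finset.univ.filter (fun j => j ∈ IA ∧ k < j ∧ 0 < A i j), A i j ≤ b i) :
    qipVal A b c IA k.val xt = ((∑ j, c j * xt j : ℝ) : EReal) := by
  have hbranch : ((∑ l, c l * xt l : ℝ) : EReal) ≤
      qipVal A b c IA (k.val + 1) (Function.update xt k (1 - xt k)) := by
    refine scp_aux A b c IA k hk xt hbin cond2 cond3 (k.val + 1) (by omega) _ ?_
    intro l hl
    by_cases hlk : l = k
    · subst hlk
      rw [Function.update_self]
      refine ⟨?_, fun _ => rfl, fun _ hlt => absurd hlt (lt_irrefl _)⟩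
      rintro (hni | hlt)
      · exact absurd hk hni
      · exact absurd hlt (lt_irrefl _)
    · have hl' : l < k := by
        have : l.val ≠ k.val := fun hc => hlk (Fin.ext hc)
        simp only [Fin.lt_def]; omega
      rw [Function.update_of_ne hlk]
      exact ⟨fun _ => rfl, fun he => absurd he hlk,
        fun _ hlt => absurd hlt (asymm hl')⟩
  rw [qipVal, dif_pos k.isLt]
  simp only [Fin.eta]
  rw [if_pos hk]
  rcases hbin k with h0 | h1
  · have e0 : Function.update xt k (0 : ℝ) = xt := by
      rw [← h0, Function.update_eq_self]
    have e1 : Function.update xt k (1 : ℝ) = Function.update xt k (1 - xt k) := by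
      rw [h0]; norm_num
    rw [e0, e1, hval]
    exact min_eq_left hbranch
  · have e1 : Function.update xt k (1 : ℝ) = xt := by
      rw [← h1, Function.update_eq_self]
    have e0 : Function.update xt k (0 : ℝ) = Function.update xt k (1 - xt k) := by
      rw [h1]; norm_num
    rw [e0, e1, hval]
    exact min_eq_right hbranch
end

section
/- Winning strategy in the flipped branch. Let a binary QIP with data (A, b, c, I∃, I∀) be given, let k ∈ I∀, let x̃ ∈ {0,1}^n, and set x̂_k = 1 − x̃_k. If Conditions (2) and (3) both hold, then the minimax value of the node reached by the prefix (x̃_1, …, x̃_{k−1}, x̂_k) satisfies val((x̃_1, …, x̃_{k−1}, x̂_k)) ≥ c·x̃; in particular a winning strategy exists in the subtree below this node. -/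
namespace Qip

variable {n m : ℕ}

/-- `q` is a leaf below the node `(j, p)` reachable when the existential player plays `x`. -/
structure IsPlayout (IA : Finset (Fin n)) (x : Fin n → ℝ) (j : ℕ) (p q : Fin n → ℝ) : Prop where
  eq_of_lt : ∀ i : Fin n, i.val < j → q i = p i
  eq_of_not_mem : ∀ i : Fin n, j ≤ i.val → i ∉ IA → q i = x i
  binary_of_mem : ∀ i : Fin n, j ≤ i.val → i ∈ IA → q i = 0 ∨ q i = 1

lemma IsPlayout.of_succ_update {IA : Finset (Fin n)} {x p q : Fin n → ℝ} {j : ℕ} (hj : j < n)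
    {a : ℝ} (hmem : ⟨j, hj⟩ ∈ IA → a = 0 ∨ a = 1) (hnot : ⟨j, hj⟩ ∉ IA → a = x ⟨j, hj⟩)
    (hq : IsPlayout IA x (j + 1) (Function.update p ⟨j, hj⟩ a) q) : IsPlayout IA x j p q := by
  have hqj : q ⟨j, hj⟩ = a := by simpa using hq.eq_of_lt ⟨j, hj⟩ j.lt_succ_self
  refine ⟨fun i hi => ?_, fun i hi hi' => ?_, fun i hi hi' => ?_⟩
  · rw [hq.eq_of_lt i (by omega), Function.update_of_ne (Fin.ne_of_val_ne hi.ne)]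
  · rcases hi.eq_or_lt with hij | hij
    · obtain rfl : i = ⟨j, hj⟩ := Fin.ext hij.symm
      exact hqj ▸ hnot hi'
    · exact hq.eq_of_not_mem i hij hi'
  · rcases hi.eq_or_lt with hij | hij
    · obtain rfl : i = ⟨j, hj⟩ := Fin.ext hij.symm
      exact hqj ▸ hmem hi'
    · exact hq.binary_of_mem i hij hi'

lemma isPlayout_self_of_le {IA : Finset (Fin n)} {x p : Fin n → ℝ} {j : ℕ} (hj : n ≤ j) :
    IsPlayout IA x j p p :=
  ⟨fun _ _ => rfl, fun i hi => absurd i.isLt (by omega), fun i hi => absurd i.isLt (by omega)⟩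

theorem le_qipVal_of_forall_isPlayout (A : Fin m → Fin n → ℝ) (b : Fin m → ℝ) (c : Fin n → ℝ)
    (IA : Finset (Fin n)) (x : Fin n → ℝ) (hx : ∀ i ∉ IA, x i = 0 ∨ x i = 1) (v : ℝ)
    (j : ℕ) (p : Fin n → ℝ)
    (h : ∀ q, IsPlayout IA x j p q → (∀ r, ∑ i, A r i * q i ≤ b r) ∧ v ≤ ∑ i, c i * q i) :
    (v : EReal) ≤ qipVal A b c IA j p := by
  have branch : ∀ (hj : j < n) (a : ℝ), (⟨j, hj⟩ ∈ IA → a = 0 ∨ a = 1) →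
      (⟨j, hj⟩ ∉ IA → a = x ⟨j, hj⟩) →
      (v : EReal) ≤ qipVal A b c IA (j + 1) (Function.update p ⟨j, hj⟩ a) :=
    fun hj a hmem hnot => le_qipVal_of_forall_isPlayout A b c IA x hx v (j + 1) _
      fun q hq => h q (hq.of_succ_update hj hmem hnot)
  rw [qipVal]
  split_ifs with hj hmem hfeas
  · exact le_min (branch hj 0 (fun _ => .inl rfl) (absurd hmem))
      (branch hj 1 (fun _ => .inr rfl) (absurd hmem))
  · rcases hx _ hmem with hx0 | hx1
    · exact (branch hj 0 (absurd · hmem) fun _ => hx0.symm).trans (le_max_left _ _)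
    · exact (branch hj 1 (absurd · hmem) fun _ => hx1.symm).trans (le_max_right _ _)
  · exact EReal.coe_le_coe_iff.mpr (h p (isPlayout_self_of_le (not_lt.mp hj))).2
  · exact absurd (h p (isPlayout_self_of_le (not_lt.mp hj))).1 hfeas
termination_by n - j

/-- The leaves below the flipped node reachable when the existential player plays `x`,
with the later universal variables relaxed from `{0, 1}` to `[0, 1]`. -/
structure IsFlippedLeaf (IA : Finset (Fin n)) (k : Fin n) (x q : Fin n → ℝ) : Prop where
  eq_of_not_mem_or_lt : ∀ i, (i ∉ IA ∨ i < k) → q i = x i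
  eq_flip : q k = 1 - x k
  mem_Icc_of_mem_of_lt : ∀ i ∈ IA, k < i → q i ∈ Set.Icc 0 1

lemma sum_mul_le_of_isFlippedLeaf {IA : Finset (Fin n)} {k : Fin n} (hk : k ∈ IA)
    {x q : Fin n → ℝ} (hq : IsFlippedLeaf IA k x q) (a : Fin n → ℝ) (β : ℝ)
    (cond : (∑ j ∈ Finset.univ.filter (fun j => j ∉ IA ∨ j < k), a j * x j)
        + a k * (1 - x k)
        + ∑ j ∈ Finset.univ.filter (fun j => j ∈ IA ∧ k < j ∧ 0 < a j), a j ≤ β) :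
    ∑ i, a i * q i ≤ β := by
  refine le_trans ?_ cond
  rw [Finset.sum_filter, Finset.sum_filter, ← Fintype.sum_ite_eq' k (fun i => a i * (1 - x i)),
    ← Finset.sum_add_distrib, ← Finset.sum_add_distrib]
  refine Finset.sum_le_sum fun i _ => ?_
  rcases lt_trichotomy i k with hlt | rfl | hgt
  · simp [hlt, hlt.ne, hlt.not_gt, hq.eq_of_not_mem_or_lt i (.inr hlt)]
  · simp [hk, hq.eq_flip]
  by_cases hi : i ∈ IA
  · have hlow : ¬(i ∉ IA ∨ i < k) := by simp [hi, hgt.not_gt]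
    obtain ⟨hq0, hq1⟩ := hq.mem_Icc_of_mem_of_lt i hi hgt
    rw [if_neg hlow, if_neg hgt.ne', zero_add, zero_add]
    split_ifs with ha
    · exact mul_le_of_le_one_right ha.2.2.le hq1
    · exact mul_nonpos_of_nonpos_of_nonneg (not_lt.mp fun h => ha ⟨hi, hgt, h⟩) hq0
  · simp [hi, hgt.ne', hq.eq_of_not_mem_or_lt i (.inl hi)]

lemma sum_mul_le_sum_mul_of_isFlippedLeaf {IA : Finset (Fin n)} {k : Fin n}
    {x q : Fin n → ℝ} (hq : IsFlippedLeaf IA k x q) (c : Fin n → ℝ)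
    (cond : c k * ((1 - x k) - x k)
        + ∑ j ∈ Finset.univ.filter (fun j => j ∈ IA ∧ k < j ∧ c j ≤ 0), c j * (1 - x j)
        - ∑ j ∈ Finset.univ.filter (fun j => j ∈ IA ∧ k < j ∧ 0 < c j), c j * x j ≥ 0) :
    ∑ i, c i * x i ≤ ∑ i, c i * q i := by
  rw [← sub_nonneg, ← Finset.sum_sub_distrib]
  refine le_trans cond ?_
  rw [Finset.sum_filter, Finset.sum_filter,
    ← Fintype.sum_ite_eq' k (fun i => c i * ((1 - x i) - x i)),
    ← Finset.sum_add_distrib, ← Finset.sum_sub_distrib]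
  refine Finset.sum_le_sum fun i _ => ?_
  rcases lt_trichotomy i k with hlt | rfl | hgt
  · simp [hlt.ne, hlt.not_gt, hq.eq_of_not_mem_or_lt i (.inr hlt)]
  · simp [hq.eq_flip, mul_sub]
  by_cases hi : i ∈ IA
  · obtain ⟨hq0, hq1⟩ := hq.mem_Icc_of_mem_of_lt i hi hgt
    rw [if_neg hgt.ne', zero_add]
    by_cases hc : c i ≤ 0
    · rw [if_pos ⟨hi, hgt, hc⟩, if_neg fun h => hc.not_gt h.2.2, sub_zero]
      linarith [mul_le_mul_of_nonpos_left hq1 hc]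
    · rw [if_neg fun h => hc h.2.2, if_pos ⟨hi, hgt, not_le.mp hc⟩]
      linarith [mul_nonneg (not_le.mp hc).le hq0]
  · simp [hi, hgt.ne', hq.eq_of_not_mem_or_lt i (.inl hi)]

lemma isFlippedLeaf_of_isPlayout {IA : Finset (Fin n)} {k : Fin n} (hk : k ∈ IA)
    {x q : Fin n → ℝ}
    (hq : IsPlayout IA x (k.val + 1) (Function.update x k (1 - x k)) q) :
    IsFlippedLeaf IA k x q where
  eq_of_not_mem_or_lt i hi := by
    have hik : i ≠ k := by rintro rfl; simp_all
    rcases lt_or_ge i.val (k.val + 1) with hlt | hge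
    · rw [hq.eq_of_lt i hlt, Function.update_of_ne hik]
    · exact hq.eq_of_not_mem i hge (hi.resolve_right fun h => by have := Fin.lt_def.mp h; omega)
  eq_flip := by simpa using hq.eq_of_lt k k.val.lt_succ_self
  mem_Icc_of_mem_of_lt i hi hki := by
    rcases hq.binary_of_mem i hki hi with h | h <;> simp [h]

end Qip

/-- **Winning strategy in the flipped branch.**  For a binary QIP with
constraint system `A x ≤ b`, objective `c` and universal indices `IA`
(existential indices being the complement), let `k ∈ IA`, let `x̃` be a full
binary assignment and set `x̂_k = 1 - x̃_k`.  If Conditions (2) and (3) both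
hold, then the minimax value of the node reached by the prefix
`(x̃_1, …, x̃_{k-1}, x̂_k)` is at least `c·x̃`; in particular a winning
strategy exists in the subtree below this node. -/
theorem flipped_branch_winning_strategy {n m : ℕ}
    (A : Fin m → Fin n → ℝ) (b : Fin m → ℝ) (c : Fin n → ℝ)
    (IA : Finset (Fin n)) (k : Fin n) (hk : k ∈ IA)
    (xt : Fin n → ℝ) (hxt : ∀ j, xt j = 0 ∨ xt j = 1)
    -- Condition (2)
    (cond2 : c k * ((1 - xt k) - xt k)
        + ∑ j ∈ Finset.univ.filter (fun j => j ∈ IA ∧ k < j ∧ c j ≤ 0), c j * (1 - xt j)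
        - ∑ j ∈ Finset.univ.filter (fun j => j ∈ IA ∧ k < j ∧ 0 < c j), c j * xt j ≥ 0)
    -- Condition (3)
    (cond3 : ∀ i,
        (∑ j ∈ Finset.univ.filter (fun j => j ∉ IA ∨ j < k), A i j * xt j)
        + A i k * (1 - xt k)
        + ∑ j ∈ Finset.univ.filter (fun j => j ∈ IA ∧ k < j ∧ 0 < A i j), A i j ≤ b i) :
    qipVal A b c IA (k.val + 1) (Function.update xt k (1 - xt k))
      ≥ ((∑ j, c j * xt j : ℝ) : EReal) := by
  refine Qip.le_qipVal_of_forall_isPlayout A b c IA xt (fun i _ => hxt i) _ _ _ fun q hq => ?_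
  have hleaf := Qip.isFlippedLeaf_of_isPlayout hk hq
  exact ⟨fun r => Qip.sum_mul_le_of_isFlippedLeaf hk hleaf (A r) (b r) (cond3 r),
    Qip.sum_mul_le_sum_mul_of_isFlippedLeaf hleaf c cond2⟩
end

section
/- Dominance counterexample (Example on variable dominance). Consider the binary QIP value V = max_{x1∈{0,1}} min_{x2∈{0,1}} M(x1,x2), where M(x1,x2) = max { −x1 − x2 − x3 : x3 ∈ {0,1}, −3x1 + 2x2 − 2x3 ≤ 0, x1 − 2x2 + x3 ≤ 0 } (with max over the empty set equal to −∞). Then: (i) variable x1 dominates x3 in the sense that c_1 ≥ c_3 and A_{i,1} ≤ A_{i,3} for both constraint rows i (here c = (−1,−1,−1), A row 1 = (−3, 2, −2), A row 2 = (1, −2, 1)); yet (ii) V = −2, the outer maximum is attained only at x1 = 0, and the optimal play (principal variation) is (x1, x2, x3) = (0, 1, 1), i.e. the optimal play has x1 = 0 and x3 = 1 despite the dominance x1 ≻ x3. -/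
/-- The inner value `M(x1, x2)` of the dominance counterexample: the maximum
(in `EReal`, with `max ∅ = ⊥ = -∞`) of the objective `-x1 - x2 - x3` over all
binary `x3` satisfying the two linear constraints. -/
noncomputable def M10 (x1 x2 : ℝ) : EReal :=
  sSup {z : EReal | ∃ x3 : ℝ, (x3 = 0 ∨ x3 = 1) ∧
    -3 * x1 + 2 * x2 - 2 * x3 ≤ 0 ∧
    x1 - 2 * x2 + x3 ≤ 0 ∧
    z = ((-x1 - x2 - x3 : ℝ) : EReal)}

lemma M10_00 : M10 0 0 = 0 := by
  have h : {z : EReal | ∃ x3 : ℝ, (x3 = 0 ∨ x3 = 1) ∧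
      -3 * (0:ℝ) + 2 * 0 - 2 * x3 ≤ 0 ∧
      (0:ℝ) - 2 * 0 + x3 ≤ 0 ∧
      z = ((-(0:ℝ) - 0 - x3 : ℝ) : EReal)} = {(0 : EReal)} := by
    ext z
    constructor
    · rintro ⟨x3, (rfl | rfl), h1, h2, rfl⟩ <;> norm_num at h2 <;> norm_num
    · rintro rfl
      exact ⟨0, Or.inl rfl, by norm_num, by norm_num, by norm_num⟩
  rw [M10, h, sSup_singleton]

lemma M10_01 : M10 0 1 = -2 := by
  have h : {z : EReal | ∃ x3 : ℝ, (x3 = 0 ∨ x3 = 1) ∧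
      -3 * (0:ℝ) + 2 * 1 - 2 * x3 ≤ 0 ∧
      (0:ℝ) - 2 * 1 + x3 ≤ 0 ∧
      z = ((-(0:ℝ) - 1 - x3 : ℝ) : EReal)} = {(-2 : EReal)} := by
    ext z
    constructor
    · rintro ⟨x3, (rfl | rfl), h1, h2, rfl⟩
      · norm_num at h1
      · norm_num
        rfl
    · rintro rfl
      refine ⟨1, Or.inr rfl, by norm_num, by norm_num, ?_⟩
      norm_num
      rfl
  rw [M10, h, sSup_singleton]

lemma M10_10 : M10 1 0 = ⊥ := by
  have h : {z : EReal | ∃ x3 : ℝ, (x3 = 0 ∨ x3 = 1) ∧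
      -3 * (1:ℝ) + 2 * 0 - 2 * x3 ≤ 0 ∧
      (1:ℝ) - 2 * 0 + x3 ≤ 0 ∧
      z = ((-(1:ℝ) - 0 - x3 : ℝ) : EReal)} = (∅ : Set EReal) := by
    ext z
    simp only [Set.mem_setOf_eq, Set.mem_empty_iff_false, iff_false]
    rintro ⟨x3, (rfl | rfl), h1, h2, rfl⟩ <;> norm_num at h2
  rw [M10, h, sSup_empty]

lemma M10_11 : M10 1 1 = -2 := by
  have h : {z : EReal | ∃ x3 : ℝ, (x3 = 0 ∨ x3 = 1) ∧
      -3 * (1:ℝ) + 2 * 1 - 2 * x3 ≤ 0 ∧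
      (1:ℝ) - 2 * 1 + x3 ≤ 0 ∧
      z = ((-(1:ℝ) - 1 - x3 : ℝ) : EReal)} = {(-2 : EReal), (-3 : EReal)} := by
    ext z
    constructor
    · rintro ⟨x3, (rfl | rfl), h1, h2, rfl⟩
      · left; norm_num; rfl
      · right; norm_num; rfl
    · rintro (rfl | rfl)
      · refine ⟨0, Or.inl rfl, by norm_num, by norm_num, ?_⟩
        norm_num; rfl
      · refine ⟨1, Or.inr rfl, by norm_num, by norm_num, ?_⟩
        norm_num; rfl
  rw [M10, h]
  rw [sSup_pair]
  have : (-3 : EReal) ≤ -2 := by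
    rw [show (-3 : EReal) = ((-3:ℝ):EReal) from rfl,
      show (-2 : EReal) = ((-2:ℝ):EReal) from rfl, EReal.coe_le_coe_iff]
    norm_num
  exact max_eq_left this

/-- **Dominance counterexample.**  For the binary QIP with objective
`c = (-1, -1, -1)` (to be maximized), constraint matrix rows `(-3, 2, -2)` and
`(1, -2, 1)` (constraints `A x ≤ 0`), and value
`V = max_{x1 ∈ {0,1}} min_{x2 ∈ {0,1}} M(x1, x2)`:
(i) variable `x1` dominates `x3`, i.e. `c 0 ≥ c 2` and `A i 0 ≤ A i 2` for
both rows `i`; yet (ii) `V = -2`, the outer maximum is attained only at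
`x1 = 0`, and the optimal play (principal variation) is
`(x1, x2, x3) = (0, 1, 1)`: the minimizing choice at `x1 = 0` is `x2 = 1`, and
`x3 = 1` is feasible there and attains the value `-0 - 1 - 1 = -2 = V`. -/
theorem dominance_counterexample :
    -- (i) the dominance relation x1 ≻ x3
    ((![-1, -1, -1] : Fin 3 → ℝ) 0 ≥ (![-1, -1, -1] : Fin 3 → ℝ) 2 ∧
      ∀ i : Fin 2, (![![-3, 2, -2], ![1, -2, 1]] : Fin 2 → Fin 3 → ℝ) i 0 ≤
        (![![-3, 2, -2], ![1, -2, 1]] : Fin 2 → Fin 3 → ℝ) i 2) ∧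
    -- (ii) the value is -2, attained only at x1 = 0
    max (min (M10 0 0) (M10 0 1)) (min (M10 1 0) (M10 1 1)) = -2 ∧
    min (M10 0 0) (M10 0 1) = -2 ∧
    min (M10 1 0) (M10 1 1) ≠ -2 ∧
    -- the principal variation is (0, 1, 1)
    M10 0 1 ≤ M10 0 0 ∧
    M10 0 1 = -2 ∧
    (-3 * (0:ℝ) + 2 * 1 - 2 * 1 ≤ 0 ∧ (0:ℝ) - 2 * 1 + 1 ≤ 0 ∧
      ((-(0:ℝ) - 1 - 1 : ℝ) : EReal) = -2) := by
  rw [M10_00, M10_01, M10_10, M10_11]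
  have hle : (-2 : EReal) ≤ 0 := by
    rw [show (-2 : EReal) = ((-2:ℝ):EReal) from rfl,
      show (0 : EReal) = ((0:ℝ):EReal) from rfl, EReal.coe_le_coe_iff]
    norm_num
  have hbot : (⊥ : EReal) ≠ -2 := by
    rw [show (-2 : EReal) = ((-2:ℝ):EReal) from rfl]
    exact EReal.bot_ne_coe _
  refine ⟨⟨by norm_num [Matrix.cons_val_two], ?_⟩, ?_, ?_, ?_, hle, rfl, by norm_num, by norm_num, ?_⟩
  · intro i; fin_cases i <;> norm_num [Matrix.cons_val_two]
  · rw [min_eq_right hle, min_eq_left (bot_le), max_eq_left (bot_le)]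
  · exact min_eq_right hle
  · rw [min_eq_left (bot_le)]; exact hbot
  · norm_num; rfl
end
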